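/- arXiv:1102.5727 — 10 statements merged into one kernel-verified Lean document; each statement's English description precedes it below -/
import Mathlib

section
/- Let p be a prime, α a primitive root mod p, and g the exponential Welch permutation g(i) = α^(i-1) mod p on {1,...,p-1}. Then g(1) = 1, and the function f : {1,...,p-2} → {1,...,p-2} defined by f(i) = g(i+1) - 1 is a bijection with the Costas property. -/
/-- The Costas property on `{1,...,n}`. -/
def HasCostasProp (n : ℕ) (f : ℕ → ℕ) : Prop :=
  ∀ i j k : ℕ, 1 ≤ i → 1 ≤ j → i + k ≤ n → j + k ≤ n →
    (f (i + k) : ℤ) - f i = (f (j + k) : ℤ) - f j → i = j ∨ k = 0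

/-- Welch construction `W₂`: if `g(i) = α^(i-1) mod p` is the exponential Welch
permutation with `c = 0`, then `g(1) = 1` and `f(i) = g(i+1) - 1` is a bijection
of `{1,...,p-2}` with the Costas property. -/
theorem welch_W2_costas (p : ℕ) (hp : p.Prime) (α : ZMod p)
    (hα : IsPrimitiveRoot α (p - 1))
    (g : ℕ → ℕ) (hg : ∀ i, g i = (α ^ (i - 1)).val)
    (f : ℕ → ℕ) (hf : ∀ i, f i = g (i + 1) - 1) :
    g 1 = 1 ∧ Set.BijOn f (Set.Icc 1 (p - 2)) (Set.Icc 1 (p - 2)) ∧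
      HasCostasProp (p - 2) f := by
  have hp1 : 1 < p := hp.one_lt
  haveI : Fact p.Prime := ⟨hp⟩
  have hpm1 : 0 < p - 1 := by omega
  have hα0 : α ≠ 0 := by
    intro h
    have := hα.pow_eq_one
    rw [h, zero_pow hpm1.ne'] at this
    exact zero_ne_one this
  -- f i = (α ^ i).val - 1 and key val bounds for i ∈ [1, p-2]
  have hfv : ∀ i, f i = (α ^ i).val - 1 := by
    intro i; rw [hf, hg]; simp
  have hval : ∀ i, 1 ≤ i → i ≤ p - 2 → 2 ≤ (α ^ i).val ∧ (α ^ i).val ≤ p - 1 := by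
    intro i h1 h2
    have hne0 : α ^ i ≠ 0 := pow_ne_zero _ hα0
    have hne1 : α ^ i ≠ 1 := hα.pow_ne_one_of_pos_of_lt (by omega) (by omega)
    have hv0 : (α ^ i).val ≠ 0 := fun h => hne0 (by rwa [ZMod.val_eq_zero] at h)
    have hv1 : (α ^ i).val ≠ 1 := by
      intro h
      apply hne1
      have := (ZMod.natCast_rightInverse (α ^ i)).symm
      rw [h] at this
      simpa using this
    have := (α ^ i).val_lt
    omega
  have hmaps : Set.MapsTo f (Set.Icc 1 (p - 2)) (Set.Icc 1 (p - 2)) := by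
    intro i hi
    simp only [Set.mem_Icc] at hi ⊢
    have := hval i hi.1 hi.2
    rw [hfv]
    omega
  have hinj : Set.InjOn f (Set.Icc 1 (p - 2)) := by
    intro i hi j hj hij
    simp only [Set.mem_Icc] at hi hj
    have h1 := hval i hi.1 hi.2
    have h2 := hval j hj.1 hj.2
    rw [hfv, hfv] at hij
    have hv : (α ^ i).val = (α ^ j).val := by omega
    have : α ^ i = α ^ j := by
      have a := (ZMod.natCast_rightInverse (α ^ i))
      have b := (ZMod.natCast_rightInverse (α ^ j))
      rw [← a, ← b, hv]
    exact hα.pow_inj (by omega) (by omega) this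
  refine ⟨by rw [hg]; simp [ZMod.val_one], ?_, ?_⟩
  · exact ((Set.finite_Icc 1 (p-2)).injOn_iff_bijOn_of_mapsTo hmaps).mp hinj
  · intro i j k hi hj hik hjk heq
    by_cases hk : k = 0
    · exact Or.inr hk
    · left
      rw [hfv, hfv, hfv, hfv] at heq
      have h1 := hval i hi (by omega)
      have h2 := hval j hj (by omega)
      have h3 := hval (i+k) (by omega) hik
      have h4 := hval (j+k) (by omega) hjk
      have heq' : ((α ^ (i+k)).val : ℤ) - (α ^ i).val = ((α ^ (j+k)).val : ℤ) - (α ^ j).val := by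
        push_cast [Nat.cast_sub (by omega : 1 ≤ (α ^ (i+k)).val)] at heq ⊢
        omega
      have hz : α ^ (i+k) - α ^ i = α ^ (j+k) - α ^ j := by
        have := congrArg (fun x : ℤ => (x : ZMod p)) heq'
        push_cast [ZMod.natCast_val, ZMod.cast_id] at this
        exact this
      have hk1 : α ^ k ≠ 1 := hα.pow_ne_one_of_pos_of_lt (by omega) (by omega)
      have hfac : α ^ i * (α ^ k - 1) = α ^ j * (α ^ k - 1) := by
        rw [pow_add, pow_add] at hz
        linear_combination hz
      have : α ^ i = α ^ j := by
        have hne : α ^ k - 1 ≠ 0 := sub_ne_zero.mpr hk1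
        exact mul_right_cancel₀ hne hfac
      exact hα.pow_inj (by omega) (by omega) this
end

section
/- Let q be a prime power and let α, β be primitive elements of the finite field F_q. Then the relation α^(f(i)) + β^i = 1 defines a function f : {1,...,q-2} → {1,...,q-2} which is a bijection with the Costas property. -/
/-- Golomb construction `G₂`: for a finite field `F` of order `q` with primitive
elements `α, β`, the relation `α^(f(i)) + β^i = 1` defines a function `f` on
`{1,...,q-2}` which is a bijection with the Costas property. -/
theorem golomb_G2_costas (q : ℕ) (F : Type*) [Field F] [Fintype F]
    (hF : Fintype.card F = q)
    (α β : F) (hα : IsPrimitiveRoot α (q - 1)) (hβ : IsPrimitiveRoot β (q - 1)) :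
    ∃ f : ℕ → ℕ, (∀ i ∈ Set.Icc 1 (q - 2), α ^ f i + β ^ i = 1) ∧
      Set.BijOn f (Set.Icc 1 (q - 2)) (Set.Icc 1 (q - 2)) ∧
      HasCostasProp (q - 2) f := by
  have hq2 : 2 ≤ q := hF ▸ Fintype.one_lt_card
  have hq1 : q - 1 ≠ 0 := by omega
  haveI : NeZero (q - 1) := ⟨hq1⟩
  have hαne : α ≠ 0 := hα.ne_zero hq1
  have hβne : β ≠ 0 := hβ.ne_zero hq1
  have hordα : orderOf α = q - 1 := (hα.eq_orderOf).symm
  have hordβ : orderOf β = q - 1 := (hβ.eq_orderOf).symm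
  -- powers in range are ≠ 1
  have hpow_ne_one : ∀ (γ : F), orderOf γ = q - 1 →
      ∀ i ∈ Set.Icc 1 (q - 2), γ ^ i ≠ 1 := by
    intro γ hord i hi h1
    simp only [Set.mem_Icc] at hi
    have := orderOf_dvd_of_pow_eq_one h1
    rw [hord] at this
    have := Nat.le_of_dvd (by omega) this
    omega
  -- injectivity of exponents on [0, q-2]
  have hinj : ∀ (γ : F), orderOf γ = q - 1 → ∀ a b : ℕ, a ≤ q - 2 → b ≤ q - 2 →
      γ ^ a = γ ^ b → a = b := by
    intro γ hord a b ha hb h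
    exact pow_injOn_Iio_orderOf (by simp [hord]; omega) (by simp [hord]; omega) h
  -- every nonzero element is a power of α with exponent in [0, q-2]
  have hsurjpow : ∀ (γ : F), orderOf γ = q - 1 → ∀ x : F, x ≠ 0 → x ≠ 1 →
      ∃ j ∈ Set.Icc 1 (q - 2), γ ^ j = x := by
    intro γ hord x hx hx1
    have hγprim : IsPrimitiveRoot γ (q - 1) := by
      rw [← hord]; exact IsPrimitiveRoot.orderOf γ
    have hxq : x ^ (q - 1) = 1 := by
      have := FiniteField.pow_card_sub_one_eq_one x hx
      rwa [hF] at this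
    obtain ⟨j, hj, hjx⟩ := hγprim.eq_pow_of_pow_eq_one hxq
    refine ⟨j, ?_, hjx⟩
    have : j ≠ 0 := by rintro rfl; simp at hjx; exact hx1 hjx.symm
    simp [Set.mem_Icc]; omega
  have key : ∀ i ∈ Set.Icc 1 (q - 2), ∃ j ∈ Set.Icc 1 (q - 2), α ^ j + β ^ i = 1 := by
    intro i hi
    have h1 : (1 : F) - β ^ i ≠ 0 := by
      intro h; apply hpow_ne_one β hordβ i hi; linear_combination -h
    have h2 : (1 : F) - β ^ i ≠ 1 := by
      intro h; exact pow_ne_zero i hβne (by linear_combination -h)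
    obtain ⟨j, hj, hjx⟩ := hsurjpow α hordα _ h1 h2
    exact ⟨j, hj, by linear_combination hjx⟩
  classical
  set f : ℕ → ℕ := fun i => if h : i ∈ Set.Icc 1 (q - 2) then (key i h).choose else i with hf
  have hfspec : ∀ i (h : i ∈ Set.Icc 1 (q - 2)),
      f i ∈ Set.Icc 1 (q - 2) ∧ α ^ f i + β ^ i = 1 := by
    intro i h
    have := (key i h).choose_spec
    simp only [hf, dif_pos h]
    exact ⟨this.1, this.2⟩
  refine ⟨f, fun i hi => (hfspec i hi).2, ⟨?_, ?_, ?_⟩, ?_⟩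
  · intro i hi; exact (hfspec i hi).1
  · intro i hi j hj hij
    have h1 := (hfspec i hi).2
    have h2 := (hfspec j hj).2
    rw [hij] at h1
    have : β ^ i = β ^ j := by linear_combination h1 - h2
    simp [Set.mem_Icc] at hi hj
    exact hinj β hordβ i j hi.2 hj.2 this
  · intro j hj
    simp only [Set.mem_Icc] at hj
    have h1 : (1 : F) - α ^ j ≠ 0 := by
      intro h; apply hpow_ne_one α hordα j (by simp [Set.mem_Icc]; omega); linear_combination -h
    have h2 : (1 : F) - α ^ j ≠ 1 := by
      intro h; exact pow_ne_zero j hαne (by linear_combination -h)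
    obtain ⟨i, hi, hix⟩ := hsurjpow β hordβ _ h1 h2
    refine ⟨i, hi, ?_⟩
    have := (hfspec i hi).2
    have hα' : α ^ f i = α ^ j := by
      rw [hix] at this; linear_combination this
    simp [Set.mem_Icc] at hi hj
    exact hinj α hordα _ _ ((hfspec i (by simp [Set.mem_Icc]; omega)).1).2 hj.2 hα'
  · intro i j k hi hj hik hjk heq
    by_cases hk : k = 0
    · right; exact hk
    left
    have hik' : i + k ∈ Set.Icc 1 (q - 2) := by simp [Set.mem_Icc]; omega
    have hjk' : j + k ∈ Set.Icc 1 (q - 2) := by simp [Set.mem_Icc]; omega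
    have hi' : i ∈ Set.Icc 1 (q - 2) := by simp [Set.mem_Icc]; omega
    have hj' : j ∈ Set.Icc 1 (q - 2) := by simp [Set.mem_Icc]; omega
    have e1 := (hfspec _ hik').2
    have e2 := (hfspec _ hjk').2
    have e3 := (hfspec _ hi').2
    have e4 := (hfspec _ hj').2
    have hnat : f (i + k) + f j = f (j + k) + f i := by
      have := heq; omega
    have hpow : α ^ (f (i + k) + f j) = α ^ (f (j + k) + f i) := by rw [hnat]
    rw [pow_add, pow_add] at hpow
    -- (1 - β^(i+k))(1 - β^j) = (1 - β^(j+k))(1 - β^i)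
    have E1 : α ^ f (i + k) = 1 - β ^ i * β ^ k := by
      rw [pow_add] at e1; linear_combination e1
    have E2 : α ^ f (j + k) = 1 - β ^ j * β ^ k := by
      rw [pow_add] at e2; linear_combination e2
    have E3 : α ^ f i = 1 - β ^ i := by linear_combination e3
    have E4 : α ^ f j = 1 - β ^ j := by linear_combination e4
    rw [E1, E2, E3, E4] at hpow
    have hmain : β ^ i * (β ^ k - 1) = β ^ j * (β ^ k - 1) := by
      linear_combination -hpow
    have hkne : β ^ k - 1 ≠ 0 := by
      intro h
      apply hpow_ne_one β hordβ k (by simp [Set.mem_Icc]; omega)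
      linear_combination h
    have : β ^ i = β ^ j := mul_right_cancel₀ hkne hmain
    simp [Set.mem_Icc] at hi' hj'
    exact hinj β hordβ i j hi'.2 hj'.2 this
end

section
/- Let q be a prime power and let α, β be primitive elements of F_q with α + β = 1, and let g be the Golomb G_2 permutation on {1,...,q-2} defined by α^(g(i)) + β^i = 1. Then g(1) = 1, and f : {1,...,q-3} → {1,...,q-3} defined by f(i) = g(i+1) - 1 is a bijection with the Costas property. -/
/-- Golomb construction `G₃`: if `α + β = 1` for the primitive elements defining the
`G₂` permutation `g` of `{1,...,q-2}`, then `g(1) = 1` and `f(i) = g(i+1) - 1` is a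
bijection of `{1,...,q-3}` with the Costas property. -/
theorem golomb_G3_costas (q : ℕ) (F : Type*) [Field F] [Fintype F]
    (hF : Fintype.card F = q)
    (α β : F) (hα : IsPrimitiveRoot α (q - 1)) (hβ : IsPrimitiveRoot β (q - 1))
    (hab : α + β = 1)
    (g : ℕ → ℕ) (hgmem : ∀ i ∈ Set.Icc 1 (q - 2), g i ∈ Set.Icc 1 (q - 2))
    (hg : ∀ i ∈ Set.Icc 1 (q - 2), α ^ g i + β ^ i = 1)
    (f : ℕ → ℕ) (hf : ∀ i, f i = g (i + 1) - 1) :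
    g 1 = 1 ∧ Set.BijOn f (Set.Icc 1 (q - 3)) (Set.Icc 1 (q - 3)) ∧
      HasCostasProp (q - 3) f := by
  have hq2 : 2 ≤ q := hF ▸ Fintype.one_lt_card
  rcases eq_or_lt_of_le hq2 with hq | hq3
  · exfalso
    have h1 : q - 1 = 1 := by omega
    rw [h1] at hα hβ
    have ha1 : α = 1 := by simpa using hα.pow_eq_one
    have hb1 : β = 1 := by simpa using hβ.pow_eq_one
    rw [ha1, hb1] at hab
    exact one_ne_zero (α := F) (by linear_combination hab)
  -- q ≥ 3
  have hβinj : ∀ s t : ℕ, s ≤ q - 2 → t ≤ q - 2 → β ^ s = β ^ t → s = t := by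
    intro s t hs ht h
    exact hβ.pow_inj (by omega) (by omega) h
  have hg1 : g 1 = 1 := by
    have h1 : (1 : ℕ) ∈ Set.Icc 1 (q - 2) := by simp; omega
    have e1 := hg 1 h1
    have hm := hgmem 1 h1
    simp only [Set.mem_Icc] at hm
    have : α ^ g 1 = α ^ 1 := by rw [pow_one]; linear_combination e1 - hab
    exact hα.pow_inj (by omega) (by omega) this
  -- key: for i ∈ [1, q-3], i+1 ∈ [1,q-2] and g (i+1) ∈ [2, q-2]
  have hkey : ∀ i : ℕ, 1 ≤ i → i ≤ q - 3 → 2 ≤ g (i + 1) ∧ g (i + 1) ≤ q - 2 := by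
    intro i hi1 hi2
    have hmem : i + 1 ∈ Set.Icc 1 (q - 2) := by simp; omega
    have hm := hgmem _ hmem
    simp only [Set.mem_Icc] at hm
    refine ⟨?_, hm.2⟩
    by_contra h
    have hgeq : g (i + 1) = 1 := by omega
    have e := hg _ hmem
    rw [hgeq, pow_one] at e
    have : β ^ (i + 1) = β ^ 1 := by rw [pow_one]; linear_combination e - hab
    have := hβinj _ _ (by omega) (by omega) this
    omega
  have hβeq : ∀ i : ℕ, 1 ≤ i → i ≤ q - 3 → β ^ (i + 1) = 1 - α ^ g (i + 1) := by
    intro i hi1 hi2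
    have e := hg (i + 1) (by simp; omega)
    linear_combination e
  have hinj : Set.InjOn f (Set.Icc 1 (q - 3)) := by
    intro i hi j hj hij
    simp only [Set.mem_Icc] at hi hj
    obtain ⟨hi2, _⟩ := hkey i hi.1 hi.2
    obtain ⟨hj2, _⟩ := hkey j hj.1 hj.2
    rw [hf i, hf j] at hij
    have hgeq : g (i + 1) = g (j + 1) := by omega
    have : β ^ (i + 1) = β ^ (j + 1) := by
      rw [hβeq i hi.1 hi.2, hβeq j hj.1 hj.2, hgeq]
    have := hβinj _ _ (by omega) (by omega) this
    omega
  have hmaps : Set.MapsTo f (Set.Icc 1 (q - 3)) (Set.Icc 1 (q - 3)) := by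
    intro i hi
    simp only [Set.mem_Icc] at hi ⊢
    obtain ⟨h2, h3⟩ := hkey i hi.1 hi.2
    rw [hf i]; omega
  refine ⟨hg1, (Set.Finite.injOn_iff_bijOn_of_mapsTo (Set.finite_Icc _ _) hmaps).mp hinj, ?_⟩
  intro i j k hi hj hik hjk hd
  by_cases hk : k = 0
  · exact Or.inr hk
  left
  -- abbreviations
  obtain ⟨hia2, hia3⟩ := hkey i hi (by omega)
  obtain ⟨hja2, hja3⟩ := hkey j hj (by omega)
  obtain ⟨hib2, hib3⟩ := hkey (i + k) (by omega) hik
  obtain ⟨hjb2, hjb3⟩ := hkey (j + k) (by omega) hjk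
  rw [hf (i + k), hf i, hf (j + k), hf j] at hd
  have hsum : g (i + k + 1) + g (j + 1) = g (i + 1) + g (j + k + 1) := by
    push_cast [Nat.cast_sub (by omega : 1 ≤ g (i + k + 1)), Nat.cast_sub (by omega : 1 ≤ g (i + 1)),
      Nat.cast_sub (by omega : 1 ≤ g (j + k + 1)), Nat.cast_sub (by omega : 1 ≤ g (j + 1))] at hd
    omega
  have hpow : α ^ g (i + k + 1) * α ^ g (j + 1) = α ^ g (i + 1) * α ^ g (j + k + 1) := by
    rw [← pow_add, ← pow_add, hsum]
  have eia := hβeq i hi (by omega)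
  have eja := hβeq j hj (by omega)
  have eib := hβeq (i + k) (by omega) hik
  have ejb := hβeq (j + k) (by omega) hjk
  have hmul : (1 - β ^ (i + k + 1)) * (1 - β ^ (j + 1)) =
      (1 - β ^ (i + 1)) * (1 - β ^ (j + k + 1)) := by
    rw [eia, eja, eib, ejb]
    linear_combination hpow
  have hsplit1 : β ^ (i + k + 1) = β ^ (i + 1) * β ^ k := by rw [← pow_add]; ring_nf
  have hsplit2 : β ^ (j + k + 1) = β ^ (j + 1) * β ^ k := by rw [← pow_add]; ring_nf
  rw [hsplit1, hsplit2] at hmul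
  have hcan : β ^ (i + 1) * (1 - β ^ k) = β ^ (j + 1) * (1 - β ^ k) := by
    linear_combination hmul
  have hzne : (1 : F) - β ^ k ≠ 0 := by
    intro h
    have hne : β ^ k ≠ 1 := hβ.pow_ne_one_of_pos_of_lt (l := k) (by omega) (by omega)
    exact hne (by linear_combination -h)
  have hxy : β ^ (i + 1) = β ^ (j + 1) := mul_right_cancel₀ hzne hcan
  have := hβinj _ _ (by omega) (by omega) hxy
  omega
end

section
/- Let q = 2^m be a power of 2 and let α, β be primitive elements of F_q with α + β = 1, and let g be the Golomb G_2 permutation defined by α^(g(i)) + β^i = 1 on {1,...,q-2}. Then g(1) = 1 and g(2) = 2, and f : {1,...,q-4} → {1,...,q-4} defined by f(i) = g(i+2) - 2 is a bijection with the Costas property. -/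
/-- Golomb construction `G₄`: in characteristic 2 (`q = 2^m`), if `α + β = 1` for the
primitive elements defining the `G₂` permutation `g` of `{1,...,q-2}`, then
`g(1) = 1`, `g(2) = 2`, and `f(i) = g(i+2) - 2` is a bijection of `{1,...,q-4}`
with the Costas property. -/
theorem golomb_G4_costas (q m : ℕ) (hq : q = 2 ^ m) (F : Type*) [Field F] [Fintype F]
    (hF : Fintype.card F = q)
    (α β : F) (hα : IsPrimitiveRoot α (q - 1)) (hβ : IsPrimitiveRoot β (q - 1))
    (hab : α + β = 1)
    (g : ℕ → ℕ) (hgmem : ∀ i ∈ Set.Icc 1 (q - 2), g i ∈ Set.Icc 1 (q - 2))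
    (hg : ∀ i ∈ Set.Icc 1 (q - 2), α ^ g i + β ^ i = 1)
    (f : ℕ → ℕ) (hf : ∀ i, f i = g (i + 2) - 2) :
    g 1 = 1 ∧ g 2 = 2 ∧ Set.BijOn f (Set.Icc 1 (q - 4)) (Set.Icc 1 (q - 4)) ∧
      HasCostasProp (q - 4) f := by
  have hcard : (q : F) = 0 := by rw [← hF]; exact FiniteField.cast_card_eq_zero F
  have hq2 : 2 ≤ q := hF ▸ Fintype.one_lt_card
  -- characteristic 2
  have hm : 1 ≤ m := by
    by_contra h
    interval_cases m <;> simp_all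
  have h2 : (2 : F) = 0 := by
    have : ((2 : ℕ) : F) ^ m = 0 := by
      rw [← Nat.cast_pow, ← hq, hcard]
    have := pow_eq_zero_iff (Nat.one_le_iff_ne_zero.mp hm) |>.mp this
    exact_mod_cast this
  -- q ≥ 4
  have hq4 : 4 ≤ q := by
    rcases Nat.lt_or_ge m 2 with h | h
    · -- m = 1, q = 2, contradiction
      exfalso
      have hm1 : m = 1 := by omega
      have hq' : q = 2 := by rw [hq, hm1]; norm_num
      have hα1 : α = 1 := by
        have := hα.pow_eq_one
        rwa [hq', pow_one] at this
      have hβ1 : β = 1 := by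
        have := hβ.pow_eq_one
        rwa [hq', pow_one] at this
      rw [hα1, hβ1] at hab
      have h21 : (2 : F) = 1 := by rw [← hab]; ring
      rw [h2] at h21
      exact zero_ne_one h21
    · calc 4 = 2 ^ 2 := rfl
        _ ≤ 2 ^ m := Nat.pow_le_pow_right (by norm_num) h
        _ = q := hq.symm
  have hneg : ∀ x : F, -x = x := by
    intro x
    have : (2 : F) * x = 0 := by rw [h2, zero_mul]
    linear_combination -this
  have hβα : β = 1 + α := by linear_combination hab + hneg α
  -- α^g i = 1 - β^i
  have hg' : ∀ i ∈ Set.Icc 1 (q - 2), α ^ g i = 1 - β ^ i := by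
    intro i hi
    have := hg i hi
    linear_combination this
  have h1mem : (1 : ℕ) ∈ Set.Icc 1 (q - 2) := by simp; omega
  have h2mem : (2 : ℕ) ∈ Set.Icc 1 (q - 2) := by
    simp only [Set.mem_Icc]; omega
  -- g 1 = 1
  have hg1 : g 1 = 1 := by
    have h := hg' 1 h1mem
    have hval : α ^ g 1 = α ^ 1 := by
      rw [h, pow_one, pow_one]
      linear_combination - hab
    have hlt : g 1 < q - 1 := by
      have := hgmem 1 h1mem
      simp only [Set.mem_Icc] at this
      omega
    exact hα.pow_inj hlt (by omega) hval
  -- g 2 = 2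
  have hg2 : g 2 = 2 := by
    have h := hg' 2 h2mem
    have hval : α ^ g 2 = α ^ 2 := by
      rw [h, hβα]
      linear_combination (-α - α ^ 2) * h2
    have hlt : g 2 < q - 1 := by
      have := hgmem 2 h2mem
      simp only [Set.mem_Icc] at this
      omega
    exact hα.pow_inj hlt (by omega) hval
  -- injectivity of g on Icc 1 (q-2)
  have hginj : ∀ i ∈ Set.Icc 1 (q - 2), ∀ j ∈ Set.Icc 1 (q - 2), g i = g j → i = j := by
    intro i hi j hj hij
    have h1 := hg' i hi
    have h2' := hg' j hj
    have : β ^ i = β ^ j := by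
      have : (1 : F) - β ^ i = 1 - β ^ j := by rw [← h1, ← h2', hij]
      linear_combination - this
    simp only [Set.mem_Icc] at hi hj
    exact hβ.pow_inj (by omega) (by omega) this
  -- f maps into Icc 1 (q-4), with g (i+2) ≥ 3
  have hgge : ∀ i ∈ Set.Icc 1 (q - 4), 3 ≤ g (i + 2) ∧ g (i + 2) ≤ q - 2 := by
    intro i hi
    simp only [Set.mem_Icc] at hi
    have hmem : i + 2 ∈ Set.Icc 1 (q - 2) := by simp only [Set.mem_Icc]; omega
    have h := hgmem (i + 2) hmem
    simp only [Set.mem_Icc] at h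
    constructor
    · rcases Nat.lt_or_ge (g (i + 2)) 3 with hlt | hge
      · exfalso
        interval_cases hgi : g (i + 2)
        · omega
        · have := hginj (i + 2) hmem 1 h1mem (by rw [hgi, hg1])
          omega
        · have := hginj (i + 2) hmem 2 h2mem (by rw [hgi, hg2])
          omega
      · exact hge
    · exact h.2
  have hfmapsto : Set.MapsTo f (Set.Icc 1 (q - 4)) (Set.Icc 1 (q - 4)) := by
    intro i hi
    have := hgge i hi
    simp only [Set.mem_Icc]
    rw [hf]
    omega
  have hfinj : Set.InjOn f (Set.Icc 1 (q - 4)) := by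
    intro i hi j hj hij
    have h1 := hgge i hi
    have h2' := hgge j hj
    rw [hf, hf] at hij
    have hgeq : g (i + 2) = g (j + 2) := by omega
    simp only [Set.mem_Icc] at hi hj
    have := hginj (i + 2) (by simp only [Set.mem_Icc]; omega) (j + 2)
      (by simp only [Set.mem_Icc]; omega) hgeq
    omega
  have hbij : Set.BijOn f (Set.Icc 1 (q - 4)) (Set.Icc 1 (q - 4)) :=
    ((Set.finite_Icc _ _).injOn_iff_bijOn_of_mapsTo hfmapsto).mp hfinj
  -- Costas property for g
  have hgcostas : ∀ i j k : ℕ, 1 ≤ i → 1 ≤ j → i + k ≤ q - 2 → j + k ≤ q - 2 →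
      (g (i + k) : ℤ) - g i = (g (j + k) : ℤ) - g j → i = j ∨ k = 0 := by
    intro i j k hi hj hik hjk heq
    rcases Nat.eq_zero_or_pos k with hk | hk
    · right; exact hk
    left
    have hsum : g (i + k) + g j = g (j + k) + g i := by omega
    have hmemi : i ∈ Set.Icc 1 (q - 2) := by simp only [Set.mem_Icc]; omega
    have hmemj : j ∈ Set.Icc 1 (q - 2) := by simp only [Set.mem_Icc]; omega
    have hmemik : i + k ∈ Set.Icc 1 (q - 2) := by simp only [Set.mem_Icc]; omega
    have hmemjk : j + k ∈ Set.Icc 1 (q - 2) := by simp only [Set.mem_Icc]; omega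
    have key : (1 - β ^ (i + k)) * (1 - β ^ j) = (1 - β ^ (j + k)) * (1 - β ^ i) := by
      rw [← hg' _ hmemik, ← hg' _ hmemjk, ← hg' _ hmemi, ← hg' _ hmemj,
        ← pow_add, ← pow_add, hsum]
    rw [pow_add, pow_add] at key
    have key2 : (β ^ i - β ^ j) * (1 - β ^ k) = 0 := by linear_combination key
    have hβk : β ^ k ≠ 1 := by
      intro h
      have := hβ.pow_inj (i := k) (j := 0) (by omega) (by omega) (by simpa using h)
      omega
    have : β ^ i - β ^ j = 0 := by
      rcases mul_eq_zero.mp key2 with h | h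
      · exact h
      · exact absurd (by linear_combination - h) hβk
    have hβij : β ^ i = β ^ j := by linear_combination this
    exact hβ.pow_inj (by omega) (by omega) hβij
  refine ⟨hg1, hg2, hbij, ?_⟩
  intro i j k hi hj hik hjk heq
  have hgi := hgge i (by simp only [Set.mem_Icc]; omega)
  have hgj := hgge j (by simp only [Set.mem_Icc]; omega)
  have hgik := hgge (i + k) (by simp only [Set.mem_Icc]; omega)
  have hgjk := hgge (j + k) (by simp only [Set.mem_Icc]; omega)
  rw [hf, hf, hf, hf] at heq
  have heq' : (g (i + 2 + k) : ℤ) - g (i + 2) = (g (j + 2 + k) : ℤ) - g (j + 2) := by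
    have e1 : i + 2 + k = i + k + 2 := by ring
    have e2 : j + 2 + k = j + k + 2 := by ring
    rw [e1, e2]
    omega
  have := hgcostas (i + 2) (j + 2) k (by omega) (by omega) (by omega) (by omega) heq'
  omega
end

section
/- Let f : {1,...,n} → {1,...,n} be a bijection, n ≥ 1. Then f has the Costas property if and only if for each k with 1 ≤ k ≤ ⌊(n-1)/2⌋, the sequence (f(j+k) - f(j) : 1 ≤ j ≤ n-k) contains no repeated values. -/
/-- Chang's theorem: a bijection `f` of `{1,...,n}` has the Costas property iff for
every `k` with `1 ≤ k ≤ ⌊(n-1)/2⌋`, the row `(f(j+k) - f(j) : 1 ≤ j ≤ n-k)` of the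
difference triangle contains no repeated values. -/
theorem chang_difference_triangle (n : ℕ) (hn : 1 ≤ n) (f : ℕ → ℕ)
    (hf : Set.BijOn f (Set.Icc 1 n) (Set.Icc 1 n)) :
    HasCostasProp n f ↔
      ∀ k, 1 ≤ k → k ≤ (n - 1) / 2 →
        ∀ j₁ j₂, 1 ≤ j₁ → 1 ≤ j₂ → j₁ + k ≤ n → j₂ + k ≤ n →
          (f (j₁ + k) : ℤ) - f j₁ = (f (j₂ + k) : ℤ) - f j₂ → j₁ = j₂ := by
  constructor
  · intro h k hk1 _ j₁ j₂ h1 h2 h3 h4 heq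
    rcases h j₁ j₂ k h1 h2 h3 h4 heq with h' | h'
    · exact h'
    · omega
  · intro h i j k hi hj hik hjk heq
    by_contra hc
    push_neg at hc
    obtain ⟨hij, hk0⟩ := hc
    have key : ∀ a b : ℕ, 1 ≤ a → a < b → a + k ≤ n → b + k ≤ n →
        (f (a + k) : ℤ) - f a = (f (b + k) : ℤ) - f b → False := by
      intro a b ha hab hak hbk habeq
      by_cases hkle : k ≤ (n - 1) / 2
      · have := h k (by omega) hkle a b ha (by omega) hak hbk habeq
        omega
      · set k' := b - a with hk'
        have hb : b = a + k' := by omega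
        have hk'le : k' ≤ (n - 1) / 2 := by omega
        have heq2 : (f (a + k') : ℤ) - f a = (f ((a + k) + k') : ℤ) - f (a + k) := by
          have hrw : a + k + k' = b + k := by omega
          rw [hrw, ← hb]
          linarith [habeq]
        have := h k' (by omega) hk'le a (a + k) ha (by omega) (by omega) (by omega) heq2
        omega
    rcases Nat.lt_or_ge i j with hlt | hge
    · exact key i j hi hlt hik hjk heq
    · exact key j i hj (by omega) hjk hik heq.symm
end

section
/- Every exponential Welch permutation is circular Costas: let p be prime, α a primitive root mod p, c an integer, and f : {0,...,p-2} → {0,...,p-2} given by f(i) = (α^(i+c) mod p) - 1. Then for every k ∈ {1,...,p-2}, the values f((i+k) mod (p-1)) - f(i), i ∈ {0,...,p-2}, are pairwise distinct modulo p. -/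
/-- Every exponential Welch permutation is circular Costas: for a prime `p`,
primitive root `α` mod `p`, shift `c`, and `f(i) = (α^(i+c) mod p) - 1` on
`{0,...,p-2}`, for every `k ∈ {1,...,p-2}` the values `f((i+k) mod (p-1)) - f(i)`
are pairwise distinct modulo `p`. -/
theorem welch_is_circular_costas (p : ℕ) (hp : p.Prime) (α : ZMod p)
    (hα : IsPrimitiveRoot α (p - 1)) (c : ℕ)
    (f : ℕ → ℕ) (hf : ∀ i, f i = (α ^ (i + c)).val - 1) :
    ∀ k, 1 ≤ k → k ≤ p - 2 → ∀ i₁ i₂, i₁ < p - 1 → i₂ < p - 1 →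
      (f ((i₁ + k) % (p - 1)) : ZMod p) - (f i₁ : ZMod p) =
        (f ((i₂ + k) % (p - 1)) : ZMod p) - (f i₂ : ZMod p) → i₁ = i₂ := by
  intro k hk1 hk2 i₁ i₂ h₁ h₂ heq
  have hp2 : 2 ≤ p := hp.two_le
  haveI : Fact p.Prime := ⟨hp⟩
  have hp3 : 3 ≤ p := by omega
  have hkp : k < p - 1 := by omega
  have hα0 : α ≠ 0 := by
    intro h
    have := hα.pow_eq_one
    rw [h, zero_pow (by omega : p - 1 ≠ 0)] at this
    exact zero_ne_one this
  have hord : orderOf α = p - 1 := (hα.eq_orderOf).symm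
  -- cast of f
  have hcast : ∀ j : ℕ, ((f j : ℕ) : ZMod p) = α ^ (j + c) - 1 := by
    intro j
    have hne : α ^ (j + c) ≠ 0 := pow_ne_zero _ hα0
    have hval : 1 ≤ (α ^ (j + c)).val := by
      have := (ZMod.val_eq_zero (α ^ (j + c))).not.mpr hne
      omega
    rw [hf j, Nat.cast_sub hval, ZMod.natCast_val, ZMod.cast_id, Nat.cast_one]
  have hmod : ∀ i : ℕ, α ^ ((i + k) % (p - 1) + c) = α ^ (i + c) * α ^ k := by
    intro i
    rw [pow_add, ← hord, pow_mod_orderOf, pow_add, pow_add]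
    ring
  rw [hcast, hcast, hcast, hcast, hmod, hmod] at heq
  have heq2 : α ^ (i₁ + c) * (α ^ k - 1) = α ^ (i₂ + c) * (α ^ k - 1) := by
    ring_nf
    ring_nf at heq
    linear_combination heq
  have hk1' : α ^ k ≠ 1 := hα.pow_ne_one_of_pos_of_lt (by omega) hkp
  have := mul_right_cancel₀ (sub_ne_zero.mpr hk1') heq2
  rw [pow_add, pow_add] at this
  have h3 := mul_right_cancel₀ (pow_ne_zero c hα0) this
  exact hα.pow_inj h₁ h₂ h3
end

section
/- No Costas array of odd order n > 1 is singly periodic: if f : {0,...,n-1} → {0,...,n-1} is a permutation with n odd, n > 1, then not all cyclic shifts f_s(i) = f((i+s) mod n) can simultaneously have the Costas property. -/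
/-- The Costas property for a permutation of `{0,...,n-1}`: all vectors
`(k, g(i+k) - g(i))` with `k ≥ 1` and `i + k ≤ n - 1` are distinct. -/
def HasCostasProp₀ (n : ℕ) (g : ℕ → ℕ) : Prop :=
  ∀ i j k : ℕ, 1 ≤ k → i + k < n → j + k < n →
    (g (i + k) : ℤ) - g i = (g (j + k) : ℤ) - g j → i = j

private lemma modsub (n u v : ℕ) (hu : u < n) (hv : v < n) :
    (v + n - u) % n = if u ≤ v then v - u else v + n - u := by
  split
  · rw [show v + n - u = (v - u) + n by omega, Nat.add_mod_right]
    exact Nat.mod_eq_of_lt (by omega)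
  · exact Nat.mod_eq_of_lt (by omega)

private lemma key (n : ℕ) (f : ℕ → ℕ)
    (H : ∀ s, s < n → HasCostasProp₀ n (fun i => f ((i + s) % n)))
    (a b k : ℕ) (ha : a < n) (hb : b < n) (hk1 : 1 ≤ k)
    (hd : (b + n - a) % n + k < n)
    (heq : (f ((a + k) % n) : ℤ) - f a = (f ((b + k) % n) : ℤ) - f b) : a = b := by
  set d := (b + n - a) % n with hdd
  have h1 : (0 + a) % n = a := by rw [Nat.zero_add, Nat.mod_eq_of_lt ha]
  have h2 : (0 + k + a) % n = (a + k) % n := by rw [show 0 + k + a = a + k by omega]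
  have h3 : (d + a) % n = b := by
    rw [hdd, Nat.mod_add_mod, show b + n - a + a = b + n by omega, Nat.add_mod_right,
      Nat.mod_eq_of_lt hb]
  have h4 : (d + k + a) % n = (b + k) % n := by
    rw [hdd, show (b + n - a) % n + k + a = (b + n - a) % n + (k + a) by omega,
      Nat.mod_add_mod, show b + n - a + (k + a) = b + k + n by omega, Nat.add_mod_right]
  have h0 : 0 = d := by
    apply H a ha 0 d k hk1 (by omega) (by omega)
    show (f ((0 + k + a) % n) : ℤ) - f ((0 + a) % n) = (f ((d + k + a) % n) : ℤ) - f ((d + a) % n)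
    rw [h1, h2, h3, h4]
    exact heq
  have e := modsub n a b ha hb
  rw [← hdd] at e
  rcases le_or_gt a b with h | h
  · rw [if_pos h] at e; omega
  · rw [if_neg (by omega)] at e; omega

private lemma cyclic (n : ℕ) (f : ℕ → ℕ)
    (H : ∀ s, s < n → HasCostasProp₀ n (fun i => f ((i + s) % n)))
    (a b k : ℕ) (ha : a < n) (hb : b < n) (hk1 : 1 ≤ k) (hk2 : 2 * k < n)
    (heq : (f ((a + k) % n) : ℤ) - f a = (f ((b + k) % n) : ℤ) - f b) : a = b := by
  by_cases hd : (b + n - a) % n + k < n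
  · exact key n f H a b k ha hb hk1 hd heq
  · have e1 := modsub n a b ha hb
    have e2 := modsub n b a hb ha
    have hd2 : (a + n - b) % n + k < n := by
      rcases lt_trichotomy a b with h | h | h
      · rw [if_pos (le_of_lt h)] at e1; rw [if_neg (by omega)] at e2; omega
      · subst h; rw [if_pos le_rfl] at e1 e2; omega
      · rw [if_neg (by omega)] at e1; rw [if_pos (le_of_lt h)] at e2; omega
    exact (key n f H b a k hb ha hk1 hd2 heq.symm).symm

/-- No Costas array of odd order `n > 1` is singly periodic: not all cyclic shifts
`fₛ(i) = f((i+s) mod n)` of a permutation `f` of `{0,...,n-1}` can have the Costas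
property. -/
theorem odd_order_not_singly_periodic (n : ℕ) (hodd : Odd n) (hn : 1 < n)
    (f : ℕ → ℕ) (hf : Set.BijOn f (Set.Iio n) (Set.Iio n)) :
    ¬ ∀ s, s < n → HasCostasProp₀ n (fun i => f ((i + s) % n)) := by
  intro H
  obtain ⟨m, hm⟩ := hodd
  have hsurj : ∀ y, ∃ x, y < n → (x < n ∧ f x = y) := by
    intro y
    by_cases hy : y < n
    · obtain ⟨x, hx, hfx⟩ := hf.surjOn (show y ∈ Set.Iio n from hy)
      exact ⟨x, fun _ => ⟨hx, hfx⟩⟩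
    · exact ⟨0, fun h => absurd h hy⟩
  choose g hg using hsurj
  have hglt : ∀ y, y < n → g y < n := fun y hy => (hg y hy).1
  have hfg : ∀ y, y < n → f (g y) = y := fun y hy => (hg y hy).2
  -- key facts about the "cyclic step" from g y to g (y+1)
  have hfacts : ∀ y, y < n - 1 → ∃ k, k ≠ 0 ∧ k < n ∧ (g (y+1) + n - g y) % n = k ∧
      (g y + k) % n = g (y+1) ∧ (g (y+1) + (n - k)) % n = g y := by
    intro y hy
    have hy1 : y < n := by omega
    have hy2 : y + 1 < n := by omega
    have hu := hglt y hy1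
    have hv := hglt (y+1) hy2
    have huv : g y ≠ g (y+1) := by
      intro h
      have := hfg y hy1
      rw [h, hfg (y+1) hy2] at this
      omega
    have e := modsub n (g y) (g (y+1)) hu hv
    rcases le_or_gt (g y) (g (y+1)) with h | h
    · rw [if_pos h] at e
      refine ⟨g (y+1) - g y, by omega, by omega, e, ?_, ?_⟩
      · rw [show g y + (g (y+1) - g y) = g (y+1) by omega, Nat.mod_eq_of_lt hv]
      · rw [show g (y+1) + (n - (g (y+1) - g y)) = g y + n by omega, Nat.add_mod_right,
          Nat.mod_eq_of_lt hu]
    · rw [if_neg (by omega)] at e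
      refine ⟨g (y+1) + n - g y, by omega, by omega, e, ?_, ?_⟩
      · rw [show g y + (g (y+1) + n - g y) = g (y+1) + n by omega, Nat.add_mod_right,
          Nat.mod_eq_of_lt hv]
      · rw [show g (y+1) + (n - (g (y+1) + n - g y)) = g y by omega, Nat.mod_eq_of_lt hu]
  -- injectivity of the step map
  have hinj : ∀ y, y < n - 1 → ∀ z, z < n - 1 →
      (g (y+1) + n - g y) % n = (g (z+1) + n - g z) % n → y = z := by
    intro y hy z hz hDeq
    obtain ⟨k, hk0, hklt, hkdef, hkadd, hksub⟩ := hfacts y hy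
    obtain ⟨k', hk0', hklt', hkdef', hkadd', hksub'⟩ := hfacts z hz
    have hkk : k = k' := by rw [← hkdef, ← hkdef', hDeq]
    subst hkk
    have h2kn : 2 * k ≠ n := by omega
    rcases lt_or_gt_of_ne h2kn with hlt | hgt
    · have hgyz : g y = g z := by
        apply cyclic n f H (g y) (g z) k (hglt y (by omega)) (hglt z (by omega))
          (by omega) hlt
        rw [hkadd, hkadd', hfg y (by omega), hfg z (by omega), hfg (y+1) (by omega),
          hfg (z+1) (by omega)]
        push_cast; ring
      have := congrArg f hgyz
      rw [hfg y (by omega), hfg z (by omega)] at this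
      exact this
    · have hgyz : g (y+1) = g (z+1) := by
        apply cyclic n f H (g (y+1)) (g (z+1)) (n - k) (hglt (y+1) (by omega))
          (hglt (z+1) (by omega)) (by omega) (by omega)
        rw [hksub, hksub', hfg y (by omega), hfg z (by omega), hfg (y+1) (by omega),
          hfg (z+1) (by omega)]
        push_cast; ring
      have := congrArg f hgyz
      rw [hfg (y+1) (by omega), hfg (z+1) (by omega)] at this
      omega
  -- the image of the step map is exactly {1,...,n-1}
  have himage : Finset.image (fun y => (g (y+1) + n - g y) % n) (Finset.range (n-1))
      = Finset.Ioo 0 n := by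
    apply Finset.eq_of_subset_of_card_le
    · intro k hk
      obtain ⟨y, hy, hyk⟩ := Finset.mem_image.mp hk
      rw [Finset.mem_range] at hy
      obtain ⟨k', hk0', hklt', hkdef', _, _⟩ := hfacts y hy
      rw [Finset.mem_Ioo]
      omega
    · rw [Finset.card_image_of_injOn (fun y hy z hz h =>
        hinj y (Finset.mem_range.mp hy) z (Finset.mem_range.mp hz) h)]
      rw [Nat.card_Ioo, Finset.card_range]
      omega
  -- the sum of steps equals 1 + 2 + ... + (n-1) = n * m
  have hgauss : (∑ k ∈ Finset.Ioo 0 n, k) = n * m := by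
    have h2 : (∑ k ∈ Finset.range n, k) * 2 = n * (n - 1) := Finset.sum_range_id_mul_two n
    have h3 : (∑ k ∈ Finset.range n, k) = ∑ k ∈ Finset.Ioo 0 n, k := by
      rw [Finset.range_eq_Ico, ← Finset.Ioo_insert_left (show (0:ℕ) < n by omega),
        Finset.sum_insert (by simp), zero_add]
    have h4 : n * (n - 1) = 2 * (n * m) := by
      rw [hm, show 2 * m + 1 - 1 = 2 * m by omega]; ring
    omega
  have hsum : (∑ y ∈ Finset.range (n-1), (g (y+1) + n - g y) % n) = n * m := by
    rw [← hgauss, ← himage, Finset.sum_image (fun y hy z hz h =>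
      hinj y (Finset.mem_range.mp hy) z (Finset.mem_range.mp hz) h)]
  -- cast to ZMod n and telescope
  have hterm : ∀ y ∈ Finset.range (n-1),
      (((g (y+1) + n - g y) % n : ℕ) : ZMod n) = (g (y+1) : ZMod n) - (g y : ZMod n) := by
    intro y hy
    rw [Finset.mem_range] at hy
    have h1 : g y ≤ g (y+1) + n := by have := hglt y (by omega); omega
    rw [ZMod.natCast_mod, Nat.cast_sub h1]
    push_cast [ZMod.natCast_self]
    ring
  have hfin : ((g (n-1) : ZMod n)) = (g 0 : ZMod n) := by
    have := Finset.sum_range_sub (fun y => (g y : ZMod n)) (n-1)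
    have hc : ((∑ y ∈ Finset.range (n-1), (g (y+1) + n - g y) % n : ℕ) : ZMod n)
        = (g (n-1) : ZMod n) - g 0 := by
      rw [Nat.cast_sum, Finset.sum_congr rfl hterm, this]
    rw [hsum] at hc
    have : ((n * m : ℕ) : ZMod n) = 0 := by
      push_cast [ZMod.natCast_self]; ring
    rw [this] at hc
    linear_combination -hc
  have hmod : g (n-1) = g 0 := by
    have := (ZMod.natCast_eq_natCast_iff _ _ _).mp hfin
    have h1 := hglt (n-1) (by omega)
    have h2 := hglt 0 (by omega)
    have := Nat.ModEq.eq_of_lt_of_lt this h1 h2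
    exact this
  have := congrArg f hmod
  rw [hfg (n-1) (by omega), hfg 0 (by omega)] at this
  omega
end

section
/- Let q be an odd prime power, α, β primitive elements of F_q, and f the Golomb G_2 permutation on {1,...,q-2} defined by α^(f(i)) + β^i = 1. Then with μ = (q-1)/2, for all i with 1 ≤ i ≤ μ - 1: f(μ+i) - f(μ-i) ≡ i·(f(μ+1) - f(μ-1)) (mod q-1). -/
/-- Necessary property of `G₂` permutations in odd characteristic: if `f` is the
Golomb `G₂` permutation of `{1,...,q-2}` defined by `α^(f(i)) + β^i = 1` in a finite
field of odd order `q`, then with `μ = (q-1)/2`, for all `1 ≤ i ≤ μ - 1`,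
`f(μ+i) - f(μ-i) ≡ i·(f(μ+1) - f(μ-1)) (mod q-1)`. -/
theorem golomb_G2_necessary_property (q : ℕ) (hq : Odd q) (F : Type*) [Field F]
    [Fintype F] (hF : Fintype.card F = q)
    (α β : F) (hα : IsPrimitiveRoot α (q - 1)) (hβ : IsPrimitiveRoot β (q - 1))
    (f : ℕ → ℕ) (hmem : ∀ i ∈ Set.Icc 1 (q - 2), f i ∈ Set.Icc 1 (q - 2))
    (hrel : ∀ i ∈ Set.Icc 1 (q - 2), α ^ f i + β ^ i = 1) :
    ∀ i, 1 ≤ i → i ≤ (q - 1) / 2 - 1 →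
      (f ((q - 1) / 2 + i) : ZMod (q - 1)) - (f ((q - 1) / 2 - i) : ZMod (q - 1)) =
        (i : ZMod (q - 1)) *
          ((f ((q - 1) / 2 + 1) : ZMod (q - 1)) - (f ((q - 1) / 2 - 1) : ZMod (q - 1))) := by
  intro i hi1 hi2
  obtain ⟨k, hk⟩ := hq
  have hcard : 1 < q := by rw [← hF]; exact Fintype.one_lt_card
  have hμ : (q - 1) / 2 = k := by omega
  rw [hμ] at hi2 ⊢
  have hk2 : 2 ≤ k := by omega
  -- β ^ k = -1
  have hb2 : β ^ k * β ^ k = 1 := by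
    rw [← pow_add]
    have h : k + k = q - 1 := by omega
    rw [h, hβ.pow_eq_one]
  have hβμ : β ^ k = -1 := by
    have hne : β ^ k ≠ 1 := hβ.pow_ne_one_of_pos_of_lt (by omega) (by omega)
    have h0 : (β ^ k - 1) * (β ^ k + 1) = 0 := by linear_combination hb2
    rcases mul_eq_zero.1 h0 with h | h
    · exact absurd (by linear_combination h) hne
    · linear_combination h
  -- key multiplicative relation
  have K : ∀ j, 1 ≤ j → j ≤ k - 1 → α ^ f (k + j) = β ^ j * α ^ f (k - j) := by
    intro j hj1 hj2
    have hm1 : k + j ∈ Set.Icc 1 (q - 2) := ⟨by omega, by omega⟩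
    have hm2 : k - j ∈ Set.Icc 1 (q - 2) := ⟨by omega, by omega⟩
    have e1 := hrel _ hm1
    have e2 := hrel _ hm2
    have hb1 : β ^ (k + j) = -β ^ j := by rw [pow_add, hβμ]; ring
    have hb2' : β ^ (k - j) * β ^ j = -1 := by
      rw [← pow_add]
      have h : k - j + j = k := by omega
      rw [h, hβμ]
    linear_combination e1 - β ^ j * e2 - hb1 + hb2'
  have K1 := K 1 le_rfl (by omega)
  have Ki := K i hi1 hi2
  have Kpow : α ^ (i * f (k + 1)) = β ^ i * α ^ (i * f (k - 1)) := by
    rw [mul_comm i, pow_mul, mul_comm i, pow_mul, K1, mul_pow, pow_one]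
  have main : α ^ (f (k + i) + i * f (k - 1)) = α ^ (i * f (k + 1) + f (k - i)) := by
    rw [pow_add, pow_add, Ki, Kpow]; ring
  -- pass to exponents mod q - 1
  have hpos : 0 < q - 1 := by omega
  have ha : ∀ a : ℕ, α ^ (a % (q - 1)) = α ^ a := by
    intro a
    conv_rhs => rw [← Nat.div_add_mod a (q - 1)]
    rw [pow_add, pow_mul, hα.pow_eq_one, one_pow, one_mul]
  have hmod : (f (k + i) + i * f (k - 1)) % (q - 1)
      = (i * f (k + 1) + f (k - i)) % (q - 1) := by
    apply hα.pow_inj (Nat.mod_lt _ hpos) (Nat.mod_lt _ hpos)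
    rw [ha, ha]; exact main
  have hz : ((f (k + i) + i * f (k - 1) : ℕ) : ZMod (q - 1))
      = ((i * f (k + 1) + f (k - i) : ℕ) : ZMod (q - 1)) := by
    rw [ZMod.natCast_eq_natCast_iff]; exact hmod
  push_cast at hz
  linear_combination hz
end

section
/- Let q = r² be a square prime power, α a primitive element of F_q, and β = α^r (also primitive). Then the Golomb G_2 permutation f defined by α^(f(i)) + β^i = 1 on {1,...,q-2} is symmetric, i.e., f is an involution: f(f(i)) = i for all i. -/
/-- Symmetric `G₂` permutations: if `q = r²` is a square prime power, `α` a primitive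
element of `F_q` and `β = α^r` (also primitive), then the Golomb `G₂` permutation `f`
of `{1,...,q-2}` defined by `α^(f(i)) + β^i = 1` is an involution: `f(f(i)) = i`. -/
theorem golomb_G2_square_symmetric (q r : ℕ) (hq : q = r ^ 2) (F : Type*) [Field F]
    [Fintype F] (hF : Fintype.card F = q)
    (α : F) (hα : IsPrimitiveRoot α (q - 1)) (hβ : IsPrimitiveRoot (α ^ r) (q - 1))
    (f : ℕ → ℕ) (hmem : ∀ i ∈ Set.Icc 1 (q - 2), f i ∈ Set.Icc 1 (q - 2))
    (hrel : ∀ i ∈ Set.Icc 1 (q - 2), α ^ f i + (α ^ r) ^ i = 1) :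
    ∀ i ∈ Set.Icc 1 (q - 2), f (f i) = i := by
  intro i hi
  rw [Set.mem_Icc] at hi
  have hfi := hmem i (Set.mem_Icc.mpr hi)
  have hffi := hmem (f i) hfi
  rw [Set.mem_Icc] at hfi hffi
  have hq3 : 3 ≤ q := by omega
  -- characteristic
  obtain ⟨p, hp⟩ := CharP.exists F
  have hpp : p.Prime := CharP.char_is_prime F p
  haveI : Fact p.Prime := ⟨hpp⟩
  obtain ⟨n, -, hcard⟩ := FiniteField.card F p
  have hrq : r ∣ q := ⟨r, by rw [hq]; ring⟩
  have hr' : r ∣ p ^ (n : ℕ) := by rw [← hcard, hF]; exact hrq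
  obtain ⟨m, -, hm⟩ := (Nat.dvd_prime_pow hpp).mp hr'
  -- α ^ q = α
  have haq : α ^ q = α := by
    have : q = (q - 1) + 1 := by omega
    rw [this, pow_succ, hα.pow_eq_one, one_mul]
  -- raise the relation at i to the r-th power
  have h1 := hrel i (Set.mem_Icc.mpr hi)
  have key : α ^ (r * f i) + α ^ i = 1 := by
    have h2 := congrArg (· ^ r) h1
    simp only [one_pow] at h2
    have e1 : (α ^ f i) ^ r = α ^ (r * f i) := by rw [← pow_mul, mul_comm]
    have e2 : ((α ^ r) ^ i) ^ r = α ^ i := by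
      rw [← pow_mul, ← pow_mul]
      have : r * (i * r) = q * i := by rw [hq]; ring
      rw [this, pow_mul, haq]
    rw [hm, add_pow_char_pow, ← hm, e1, e2] at h2
    exact h2
  have h3 := hrel (f i) (Set.mem_Icc.mpr hfi)
  rw [← pow_mul] at h3
  have heq : α ^ f (f i) = α ^ i := by
    have h4 := h3.trans key.symm
    rw [add_comm (α ^ (r * f i))] at h4
    exact add_right_cancel h4
  exact hα.pow_inj (by omega) (by omega) heq
end

section
/- The number of fixed points of the Golomb G_2 permutation with β = α^r (gcd(r, q-1) = 1) on {1,...,q-2} is determined as follows: f(i) = i iff x = α^i satisfies x^r + x = 1, so the number of fixed points equals |{x ∈ F_q : x^r + x = 1, x ∉ {0, 1}}|. -/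
/-- Fixed points of the `G₂` permutation with `β = α^r`, `gcd(r, q-1) = 1`: the number
of fixed points of `f` on `{1,...,q-2}` equals the number of `x ∈ F_q` with
`x^r + x = 1` and `x ∉ {0, 1}`. -/
theorem golomb_G2_fixed_points (q : ℕ) (F : Type*) [Field F] [Fintype F]
    [DecidableEq F] (hF : Fintype.card F = q)
    (α : F) (hα : IsPrimitiveRoot α (q - 1)) (r : ℕ) (hr : Nat.Coprime r (q - 1))
    (f : ℕ → ℕ) (hmem : ∀ i ∈ Set.Icc 1 (q - 2), f i ∈ Set.Icc 1 (q - 2))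
    (hrel : ∀ i ∈ Set.Icc 1 (q - 2), α ^ f i + (α ^ r) ^ i = 1) :
    ((Finset.Icc 1 (q - 2)).filter (fun i => f i = i)).card =
      (Finset.univ.filter (fun x : F => x ^ r + x = 1 ∧ x ≠ 0 ∧ x ≠ 1)).card := by
  have hq : 1 < q := hF ▸ Fintype.one_lt_card
  have hinj : ∀ i < q - 1, ∀ j < q - 1, α ^ i = α ^ j → i = j := fun i hi j hj h =>
    hα.pow_inj hi hj h
  have hα0 : α ≠ 0 := by
    intro h
    have := hα.pow_eq_one
    rw [h, zero_pow (by omega : q - 1 ≠ 0)] at this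
    exact zero_ne_one this
  have hone : ∀ i ∈ Set.Icc 1 (q - 2), α ^ i ≠ 1 := by
    intro i hi h
    simp only [Set.mem_Icc] at hi
    have := hinj i (by omega) 0 (by omega) (by simpa using h)
    omega
  -- surjectivity of powers onto nonzero elements
  have himg : (Finset.range (q - 1)).image (α ^ ·) = Finset.univ.filter (· ≠ 0) := by
    apply Finset.eq_of_subset_of_card_le
    · intro x hx
      simp only [Finset.mem_image, Finset.mem_range] at hx
      obtain ⟨i, _, rfl⟩ := hx
      simp [pow_ne_zero _ hα0]
    · rw [Finset.filter_ne', Finset.card_erase_of_mem (Finset.mem_univ _),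
        Finset.card_univ, hF,
        Finset.card_image_of_injOn (fun i hi j hj h =>
          hinj i (Finset.mem_range.mp hi) j (Finset.mem_range.mp hj) h),
        Finset.card_range]
  have hsurj : ∀ x : F, x ≠ 0 → ∃ i < q - 1, α ^ i = x := by
    intro x hx
    have : x ∈ (Finset.range (q - 1)).image (α ^ ·) := by
      rw [himg]; simp [hx]
    simpa using this
  apply Finset.card_bij (fun i _ => α ^ i)
  · intro i hi
    simp only [Finset.mem_filter, Finset.mem_Icc] at hi
    obtain ⟨hi1, hfi⟩ := hi
    have hi' : i ∈ Set.Icc 1 (q - 2) := Set.mem_Icc.mpr hi1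
    have h1 := hrel i hi'
    rw [hfi, ← pow_mul, mul_comm r i, pow_mul] at h1
    simp only [Finset.mem_filter, Finset.mem_univ, true_and]
    refine ⟨by linear_combination h1, pow_ne_zero _ hα0, hone i hi'⟩
  · intro i hi j hj h
    simp only [Finset.mem_filter, Finset.mem_Icc] at hi hj
    exact hinj i (by omega) j (by omega) h
  · intro x hx
    simp only [Finset.mem_filter, Finset.mem_univ, true_and] at hx
    obtain ⟨hxr, hx0, hx1⟩ := hx
    obtain ⟨i, hi, rfl⟩ := hsurj x hx0
    have hi0 : i ≠ 0 := by rintro rfl; exact hx1 (pow_zero α)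
    have hii : i ∈ Set.Icc 1 (q - 2) := Set.mem_Icc.mpr ⟨by omega, by omega⟩
    have h1 := hrel i hii
    rw [← pow_mul, mul_comm r i, pow_mul] at h1
    have hfi : α ^ f i = α ^ i := by linear_combination h1 - hxr
    have hfm := hmem i hii
    simp only [Set.mem_Icc] at hfm
    have : f i = i := hinj (f i) (by omega) i (by omega) hfi
    exact ⟨i, Finset.mem_filter.mpr ⟨Finset.mem_Icc.mpr ⟨by omega, by omega⟩, this⟩, rfl⟩
end
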